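/- In the setting of the arrow matrix A above, if λ = α + iβ is an eigenvalue with α ≥ 0, then (since λ + bᵢ ≠ 0 for all i) α = -D - Σᵢ aᵢ + Σᵢ aᵢ cᵢ(bᵢ+α)/((bᵢ+α)² + β²), and each term satisfies aᵢ cᵢ(bᵢ+α)/((bᵢ+α)²+β²) ≤ aᵢ, yielding α ≤ -D < 0, a contradiction. -/

import Mathlib

/-!
For an eigenvector `v` of the arrowhead matrix with corner `d`, border `c`, `a` and diagonal `δ`,
the lower rows give `vᵢ = aᵢ v₀ / (z - δᵢ)`, so `v₀ ≠ 0`, and the first row becomes the secular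
equation `z = d + ∑ cᵢ aᵢ / (z - δᵢ)`. With `δᵢ = -bᵢ` and `Re z ≥ 0`, the real part of the
`i`-th term is `aᵢ cᵢ (bᵢ + Re z) / |z + bᵢ|² ≤ aᵢ`, which gives `Re z ≤ -D < 0`.
-/

open Matrix

theorem Matrix.exists_mulVec_eq_smul_of_mem_spectrum {K ι : Type*} [Field K] [Fintype ι]
    [DecidableEq ι] {M : Matrix ι ι K} {z : K} (hz : z ∈ spectrum K M) :
    ∃ v ≠ 0, M *ᵥ v = z • v := by
  rw [← Matrix.spectrum_toLin', ← Module.End.hasEigenvalue_iff_mem_spectrum] at hz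
  obtain ⟨v, hv⟩ := hz.exists_hasEigenvector
  exact ⟨v, hv.2, by rw [← Matrix.toLin'_apply]; exact hv.apply_eq_smul⟩

section Arrowhead

variable {K ι : Type*} [Field K] [Fintype ι] [DecidableEq ι]

def arrowheadMatrix (d : K) (c a δ : ι → K) : Matrix (Unit ⊕ ι) (Unit ⊕ ι) K :=
  fromBlocks (of fun _ _ => d) (replicateRow Unit c) (replicateCol Unit a) (diagonal δ)

theorem arrowheadMatrix_mulVec_inl (d : K) (c a δ : ι → K) (v : Unit ⊕ ι → K) :
    (arrowheadMatrix d c a δ *ᵥ v) (Sum.inl ()) =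
      d * v (Sum.inl ()) + ∑ i, c i * v (Sum.inr i) := by
  simp [arrowheadMatrix, mulVec, dotProduct]

theorem arrowheadMatrix_mulVec_inr (d : K) (c a δ : ι → K) (v : Unit ⊕ ι → K) (i : ι) :
    (arrowheadMatrix d c a δ *ᵥ v) (Sum.inr i) = a i * v (Sum.inl ()) + δ i * v (Sum.inr i) := by
  simp [arrowheadMatrix, mulVec, dotProduct, diagonal_apply]

theorem eq_add_sum_div_of_mem_spectrum_arrowheadMatrix {d z : K} {c a δ : ι → K}
    (hz : z ∈ spectrum K (arrowheadMatrix d c a δ)) (hzδ : ∀ i, z ≠ δ i) :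
    z = d + ∑ i, c i * a i / (z - δ i) := by
  obtain ⟨v, hv0, hv⟩ := Matrix.exists_mulVec_eq_smul_of_mem_spectrum hz
  have hsub : ∀ i, z - δ i ≠ 0 := fun i => sub_ne_zero.2 (hzδ i)
  have hvi : ∀ i, v (Sum.inr i) = a i * v (Sum.inl ()) / (z - δ i) := by
    intro i
    have h := congrFun hv (Sum.inr i)
    rw [arrowheadMatrix_mulVec_inr, Pi.smul_apply, smul_eq_mul] at h
    rw [eq_div_iff (hsub i)]
    linear_combination -h
  have hv_inl : v (Sum.inl ()) ≠ 0 := by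
    intro h0
    apply hv0
    funext j
    rcases j with ⟨⟩ | i
    · exact h0
    · simp [hvi i, h0]
  have h := congrFun hv (Sum.inl ())
  rw [arrowheadMatrix_mulVec_inl] at h
  simp only [hvi, Pi.smul_apply, smul_eq_mul] at h
  apply mul_right_cancel₀ hv_inl
  rw [← h, add_mul, Finset.sum_mul]
  congr 1
  refine Finset.sum_congr rfl fun i _ => ?_
  field_simp [hsub i]

end Arrowhead

theorem Complex.re_ofReal_div_add_ofReal (p q : ℝ) (z : ℂ) :
    ((p : ℂ) / (z + q)).re = p * (q + z.re) / ((q + z.re) ^ 2 + z.im ^ 2) := by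
  rw [Complex.div_re, Complex.normSq_apply]
  simp only [Complex.ofReal_re, Complex.ofReal_im, Complex.add_re, Complex.add_im]
  ring

theorem div_sq_add_sq_le_one {b c α β : ℝ} (hb : 0 < b) (hc : c ≤ b) (hα : 0 ≤ α) :
    c * (b + α) / ((b + α) ^ 2 + β ^ 2) ≤ 1 := by
  have hbα : 0 < b + α := by linarith
  rw [div_le_one (by positivity)]
  calc c * (b + α) ≤ b * (b + α) := by gcongr
    _ ≤ (b + α) ^ 2 := by nlinarith
    _ ≤ (b + α) ^ 2 + β ^ 2 := by nlinarith [sq_nonneg β]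

theorem stmt12 (n : ℕ) (D : ℝ) (a b c : Fin n → ℝ)
    (hD : 0 < D) (ha : ∀ i, 0 ≤ a i) (hb : ∀ i, 0 < b i) (hc : ∀ i, c i ≤ b i)
    (A : Matrix (Unit ⊕ Fin n) (Unit ⊕ Fin n) ℝ)
    (hA : ∀ i j, A i j =
      match i, j with
      | Sum.inl _, Sum.inl _ => -D - ∑ k, a k
      | Sum.inl _, Sum.inr j => c j
      | Sum.inr i, Sum.inl _ => a i
      | Sum.inr i, Sum.inr j => if i = j then -b i else 0)
    (z : ℂ) (hz : z ∈ spectrum ℂ (A.map (algebraMap ℝ ℂ)))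
    (hα : 0 ≤ z.re) :
    (∀ i, (z + (b i : ℂ)) ≠ 0) ∧
    z.re = -D - ∑ i, a i +
      ∑ i, a i * (c i * (b i + z.re) / ((b i + z.re) ^ 2 + z.im ^ 2)) ∧
    (∀ i, a i * (c i * (b i + z.re) / ((b i + z.re) ^ 2 + z.im ^ 2)) ≤ a i) ∧
    z.re ≤ -D ∧
    False := by
  have hne : ∀ i, z + (b i : ℂ) ≠ 0 := fun i h => by
    have := congrArg Complex.re h
    simp only [Complex.add_re, Complex.ofReal_re, Complex.zero_re] at this
    linarith [hb i]
  have hA' : A.map (algebraMap ℝ ℂ) = arrowheadMatrix ((-D - ∑ k, a k : ℝ) : ℂ)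
      (fun i => (c i : ℂ)) (fun i => (a i : ℂ)) fun i => -(b i : ℂ) := by
    ext (_ | i) (_ | j) <;> simp [hA, arrowheadMatrix, diagonal_apply, apply_ite Complex.ofReal]
  rw [hA'] at hz
  have hsecular := eq_add_sum_div_of_mem_spectrum_arrowheadMatrix hz fun i h =>
    hne i (by rw [h, neg_add_cancel])
  have hsecular_re : z.re = -D - ∑ i, a i +
      ∑ i, a i * (c i * (b i + z.re) / ((b i + z.re) ^ 2 + z.im ^ 2)) := by
    have := congrArg Complex.re hsecular
    simp only [Complex.add_re, Complex.re_sum, Complex.ofReal_re, ← Complex.ofReal_mul,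
      sub_neg_eq_add, Complex.re_ofReal_div_add_ofReal] at this
    simpa only [mul_comm (c _), mul_assoc, mul_div_assoc] using this
  have hterm : ∀ i, a i * (c i * (b i + z.re) / ((b i + z.re) ^ 2 + z.im ^ 2)) ≤ a i :=
    fun i => mul_le_of_le_one_right (ha i) (div_sq_add_sq_le_one (hb i) (hc i) hα)
  have hle : z.re ≤ -D := by
    linarith [Finset.sum_le_sum fun i (_ : i ∈ Finset.univ) => hterm i]
  exact ⟨hne, hsecular_re, hterm, hle, by linarith⟩
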